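/- arXiv:1903.00560 — 4 statements merged into one kernel-verified Lean document; each statement's English description precedes it below -/
import Mathlib

section
/- Let R be a discrete valuation ring with maximal ideal generated by π and fraction field F, let B be a quaternion algebra over F, and let O ⊆ B be an R-order. Then O contains a quadratic R-subalgebra S that is integrally closed in FS if and only if there exists α ∈ O such that for all r ∈ R, either π ∤ trd(α − r) or π² ∤ nrd(α − r), where trd and nrd denote the reduced trace and reduced norm. -/
/-- `O` is an `R`-order in the quaternion algebra `B`: a subring that is a full `R`-lattice. -/
def IsQuaternionOrder (R F B : Type*) [CommRing R] [Field F] [Algebra R F]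
    [Ring B] [Algebra F B] [Algebra R B] [IsScalarTower R F B]
    (O : Subalgebra R B) : Prop :=
  Module.Finite R O ∧ Submodule.span F (O : Set B) = ⊤

/-- `O` is basic: it contains a commutative quadratic `R`-subalgebra `S` (free of rank `2`
as an `R`-module) that is integrally closed in its total quotient ring `F·S`. -/
def IsBasicOrder (R F B : Type*) [CommRing R] [Field F] [Algebra R F]
    [Ring B] [Algebra F B] [Algebra R B] [IsScalarTower R F B]
    (O : Subalgebra R B) : Prop :=
  ∃ S : Subalgebra R B, S ≤ O ∧ (∀ x ∈ S, ∀ y ∈ S, x * y = y * x) ∧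
    Module.Free R S ∧ Module.finrank R S = 2 ∧
    ∀ β ∈ Submodule.span F (S : Set B), IsIntegral R β → β ∈ S

/-!
The reduced trace and norm detect integrality: `x ∈ B` is integral over `R` iff `trd x` and
`nrd x` lie in `R` (for `x ∉ F` this is Gauss's lemma applied to `X² - trd x X + nrd x`).

If `S = R + Rα` is integrally closed and `π ∣ trd (α - r)`, `π² ∣ nrd (α - r)`, then
`(α - r) / π` is integral and lies in `F S`, hence in `S`, which is absurd. Such a basis `1, α` of
`S` exists because `1 ∉ π S`.

Conversely, `R[α] = R + Rα` is integrally closed: if `c + dα` is integral with `d ∉ R`, then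
`d⁻¹ ∈ πR` and `α - r = d⁻¹ (c + dα)` with `r = -c/d ∈ R` contradicts the hypothesis on `α`;
if `d ∈ R`, the norm equation shows that `c` is integral.
-/

open Polynomial

section ReducedTraceNorm

variable {F B : Type*} [Field F] [Ring B] [Algebra F B] (trd : B →ₗ[F] F) (nrd : B → F)

theorem sq_eq_trd_smul_sub_nrd_smul
    (hchar : ∀ α : B, α ^ 2 - algebraMap F B (trd α) * α + algebraMap F B (nrd α) = 0) (α : B) :
    α ^ 2 = trd α • α - nrd α • 1 := by
  rw [Algebra.smul_def, Algebra.smul_def, mul_one, ← sub_eq_zero, ← hchar α]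
  abel

theorem trd_algebraMap_add_smul (htrd1 : trd 1 = 2) (c d : F) (α : B) :
    trd (algebraMap F B c + d • α) = 2 * c + d * trd α := by
  rw [map_add, map_smul, Algebra.algebraMap_eq_smul_one, map_smul, htrd1, smul_eq_mul,
    smul_eq_mul, mul_comm]

theorem trd_algebraMap (htrd1 : trd 1 = 2) (c : F) : trd (algebraMap F B c) = 2 * c := by
  simpa using trd_algebraMap_add_smul trd htrd1 c 0 1

theorem trd_sub_algebraMap (htrd1 : trd 1 = 2) (α : B) (c : F) :
    trd (α - algebraMap F B c) = trd α - 2 * c := by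
  rw [map_sub, trd_algebraMap trd htrd1]

noncomputable def reducedCharpoly (x : B) : F[X] := X ^ 2 - C (trd x) * X + C (nrd x)

theorem reducedCharpoly_monic (x : B) : (reducedCharpoly trd nrd x).Monic := by
  unfold reducedCharpoly; monicity!

theorem reducedCharpoly_natDegree (x : B) : (reducedCharpoly trd nrd x).natDegree = 2 := by
  unfold reducedCharpoly; compute_degree!

theorem reducedCharpoly_coeff_zero (x : B) : (reducedCharpoly trd nrd x).coeff 0 = nrd x := by
  simp [reducedCharpoly]

theorem reducedCharpoly_coeff_one (x : B) : (reducedCharpoly trd nrd x).coeff 1 = -trd x := by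
  simp [reducedCharpoly]

theorem aeval_reducedCharpoly
    (hchar : ∀ α : B, α ^ 2 - algebraMap F B (trd α) * α + algebraMap F B (nrd α) = 0) (x : B) :
    aeval x (reducedCharpoly trd nrd x) = 0 := by
  simpa [reducedCharpoly] using hchar x

variable [Nontrivial B]

theorem nrd_algebraMap_add_smul
    (hchar : ∀ α : B, α ^ 2 - algebraMap F B (trd α) * α + algebraMap F B (nrd α) = 0)
    (htrd1 : trd 1 = 2) (c d : F) (α : B) :
    nrd (algebraMap F B c + d • α) = c ^ 2 + c * d * trd α + d ^ 2 * nrd α := by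
  set γ := algebraMap F B c + d • α
  have hγ : nrd γ • (1 : B) = trd γ • γ - γ ^ 2 := by
    rw [sq_eq_trd_smul_sub_nrd_smul trd nrd hchar]; abel
  have hsq : γ ^ 2 = (c ^ 2) • (1 : B) + (2 * c * d) • α + d ^ 2 • α ^ 2 := by
    simp only [γ, Algebra.algebraMap_eq_smul_one, sq, add_mul, mul_add, smul_mul_smul_comm,
      one_mul, mul_one]
    module
  apply FaithfulSMul.algebraMap_injective F B
  rw [Algebra.algebraMap_eq_smul_one, Algebra.algebraMap_eq_smul_one, hγ, hsq,
    trd_algebraMap_add_smul trd htrd1, sq_eq_trd_smul_sub_nrd_smul trd nrd hchar α]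
  simp only [γ, Algebra.algebraMap_eq_smul_one]
  module

theorem nrd_algebraMap
    (hchar : ∀ α : B, α ^ 2 - algebraMap F B (trd α) * α + algebraMap F B (nrd α) = 0)
    (htrd1 : trd 1 = 2) (c : F) : nrd (algebraMap F B c) = c ^ 2 := by
  simpa using nrd_algebraMap_add_smul trd nrd hchar htrd1 c 0 1

theorem nrd_smul
    (hchar : ∀ α : B, α ^ 2 - algebraMap F B (trd α) * α + algebraMap F B (nrd α) = 0)
    (htrd1 : trd 1 = 2) (d : F) (α : B) : nrd (d • α) = d ^ 2 * nrd α := by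
  simpa using nrd_algebraMap_add_smul trd nrd hchar htrd1 0 d α

theorem nrd_sub_algebraMap
    (hchar : ∀ α : B, α ^ 2 - algebraMap F B (trd α) * α + algebraMap F B (nrd α) = 0)
    (htrd1 : trd 1 = 2) (α : B) (c : F) :
    nrd (α - algebraMap F B c) = c ^ 2 - c * trd α + nrd α := by
  have := nrd_algebraMap_add_smul trd nrd hchar htrd1 (-c) 1 α
  rw [map_neg, one_smul, neg_add_eq_sub] at this
  rw [this]; ring

theorem minpoly_eq_reducedCharpoly
    (hchar : ∀ α : B, α ^ 2 - algebraMap F B (trd α) * α + algebraMap F B (nrd α) = 0)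
    {x : B} (hx : x ∉ Set.range (algebraMap F B)) :
    minpoly F x = reducedCharpoly trd nrd x := by
  have hQ := aeval_reducedCharpoly trd nrd hchar x
  have hint : IsIntegral F x := ⟨_, reducedCharpoly_monic trd nrd x, hQ⟩
  refine eq_of_dvd_of_natDegree_le_of_leadingCoeff (minpoly.dvd F x hQ) ?_ ?_
  · rw [reducedCharpoly_natDegree]
    exact (minpoly.two_le_natDegree_iff hint).mpr hx
  · rw [(minpoly.monic hint).leadingCoeff, (reducedCharpoly_monic trd nrd x).leadingCoeff]

theorem linearIndependent_one_of_notMem_range {α : B}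
    (hα : α ∉ Set.range (algebraMap F B)) : LinearIndependent F ![1, α] := by
  refine LinearIndependent.pair_iff.mpr fun s t hst => ?_
  obtain rfl | ht := eq_or_ne t 0
  · simpa using hst
  · refine absurd ⟨-(s / t), ?_⟩ hα
    calc algebraMap F B (-(s / t)) = t⁻¹ • -(s • 1) := by
          rw [Algebra.algebraMap_eq_smul_one, smul_neg, smul_smul, neg_smul, inv_mul_eq_div]
      _ = α := by rw [← eq_neg_of_add_eq_zero_right hst, inv_smul_smul₀ ht]

end ReducedTraceNorm

theorem isIntegral_of_sq_sub_mul_add_eq_zero {R A : Type*} [CommRing R] [Ring A] [Algebra R A]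
    {x : A} {a b : R} (h : x ^ 2 - algebraMap R A a * x + algebraMap R A b = 0) :
    IsIntegral R x :=
  ⟨X ^ 2 - C a * X + C b, by monicity!, by simpa [← aeval_def] using h⟩

theorem toSubmodule_adjoin_singleton_eq_span_pair {R A : Type*} [CommRing R] [Ring A]
    [Algebra R A] {α : A} (hα : α * α ∈ Submodule.span R {1, α}) :
    Subalgebra.toSubmodule (Algebra.adjoin R {α}) = Submodule.span R {1, α} := by
  have hmul {x y : A} (hx : x ∈ Submodule.span R {1, α}) (hy : y ∈ Submodule.span R {1, α}) :
      x * y ∈ Submodule.span R {1, α} := by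
    have hle : Submodule.span R {1, α} * Submodule.span R {1, α} ≤ Submodule.span R {1, α} := by
      rw [Submodule.span_mul_span, Submodule.span_le]
      rintro _ ⟨a, ha, b, hb, rfl⟩
      rcases ha with rfl | rfl <;> rcases hb with rfl | rfl <;>
        first | exact hα | simpa using Submodule.subset_span (by simp)
    exact hle (Submodule.mul_mem_mul hx hy)
  refine le_antisymm ?_ (Submodule.span_le.mpr ?_)
  · exact Algebra.adjoin_le (S := (Submodule.span R {1, α}).toSubalgebra
      (Submodule.subset_span (by simp)) fun _ _ => hmul)
      (by simpa using Submodule.subset_span (by simp))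
  · exact Set.insert_subset_iff.mpr ⟨(Algebra.adjoin R {α}).one_mem,
      Set.singleton_subset_iff.mpr (Algebra.self_mem_adjoin_singleton R α)⟩

section Integrality

variable {R F B : Type*} [CommRing R] [IsIntegrallyClosed R]
  [Field F] [Algebra R F] [IsFractionRing R F]
  [Ring B] [Nontrivial B] [Algebra F B] [Algebra R B] [IsScalarTower R F B]
  (trd : B →ₗ[F] F) (nrd : B → F)
  (hchar : ∀ α : B, α ^ 2 - algebraMap F B (trd α) * α + algebraMap F B (nrd α) = 0)
  (htrd1 : trd 1 = 2)

include hchar htrd1 in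
theorem isIntegral_iff_trd_mem_and_nrd_mem (x : B) :
    IsIntegral R x ↔ trd x ∈ (algebraMap R F).range ∧ nrd x ∈ (algebraMap R F).range := by
  constructor
  · intro hx
    by_cases hxF : x ∈ Set.range (algebraMap F B)
    · obtain ⟨c, rfl⟩ := hxF
      obtain ⟨r, rfl⟩ := IsIntegrallyClosed.isIntegral_iff.mp
        ((isIntegral_algebraMap_iff (FaithfulSMul.algebraMap_injective F B)).mp hx)
      rw [trd_algebraMap trd htrd1, nrd_algebraMap trd nrd hchar htrd1]
      exact ⟨⟨2 * r, by rw [map_mul, map_ofNat]⟩, ⟨r ^ 2, map_pow _ _ _⟩⟩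
    · obtain ⟨p, hp, hpx⟩ := hx
      have hdvd : reducedCharpoly trd nrd x ∣ p.map (algebraMap R F) := by
        rw [← minpoly_eq_reducedCharpoly trd nrd hchar hxF]
        exact minpoly.dvd F x (by rwa [aeval_map_algebraMap, aeval_def])
      obtain ⟨g, hg⟩ := IsIntegrallyClosed.eq_map_mul_C_of_dvd F hp hdvd
      rw [(reducedCharpoly_monic trd nrd x).leadingCoeff, C_1, mul_one] at hg
      have hcoeff (n : ℕ) : (reducedCharpoly trd nrd x).coeff n ∈ (algebraMap R F).range :=
        ⟨g.coeff n, by rw [← hg, coeff_map]⟩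
      refine ⟨?_, reducedCharpoly_coeff_zero trd nrd x ▸ hcoeff 0⟩
      rw [← neg_neg (trd x), ← reducedCharpoly_coeff_one]
      exact neg_mem (hcoeff 1)
  · rintro ⟨⟨t, ht⟩, ⟨n, hn⟩⟩
    refine isIntegral_of_sq_sub_mul_add_eq_zero (a := t) (b := n) ?_
    rw [IsScalarTower.algebraMap_apply R F B, IsScalarTower.algebraMap_apply R F B, ht, hn]
    exact hchar x

theorem isUnit_of_smul_eq_one_of_isIntegral {x : B} (hx : IsIntegral R x) {a : R}
    (h : algebraMap R F a • x = 1) : IsUnit a := by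
  have ha : algebraMap R F a ≠ 0 := by
    rintro h0
    rw [h0, zero_smul] at h
    exact zero_ne_one h
  have hxF : x = algebraMap F B (algebraMap R F a)⁻¹ := by
    rw [Algebra.algebraMap_eq_smul_one, ← h, inv_smul_smul₀ ha]
  obtain ⟨b, hb⟩ := IsIntegrallyClosed.isIntegral_iff.mp
    ((isIntegral_algebraMap_iff (FaithfulSMul.algebraMap_injective F B)).mp (hxF ▸ hx))
  refine IsUnit.of_mul_eq_one b (IsFractionRing.injective R F ?_)
  rw [map_mul, hb, map_one, mul_inv_cancel₀ ha]

include hchar htrd1 in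
theorem not_dvd_trd_sub_or_not_dvd_nrd_sub (S : Subalgebra R B)
    (hS : ∀ β ∈ Submodule.span F (S : Set B), IsIntegral R β → β ∈ S)
    {α : B} (hαS : α ∈ S) (hSα : ∀ x ∈ S, x ∈ Submodule.span R {1, α})
    (hα : LinearIndependent F ![1, α]) {π : R} (hπ : Irreducible π) (r : R) :
    (¬ ∃ s : R, trd (α - algebraMap R B r) = algebraMap R F (π * s)) ∨
      (¬ ∃ s : R, nrd (α - algebraMap R B r) = algebraMap R F (π ^ 2 * s)) := by
  refine not_and_or.mp ?_
  rintro ⟨⟨s₁, h₁⟩, s₂, h₂⟩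
  have hπF : algebraMap R F π ≠ 0 :=
    (map_ne_zero_iff _ (IsFractionRing.injective R F)).mpr hπ.ne_zero
  set β := (algebraMap R F π)⁻¹ • (α - algebraMap R B r) with hβ
  have hβint : IsIntegral R β := by
    refine (isIntegral_iff_trd_mem_and_nrd_mem trd nrd hchar htrd1 β).mpr ⟨⟨s₁, ?_⟩, ⟨s₂, ?_⟩⟩
    · rw [hβ, map_smul, h₁, smul_eq_mul, map_mul]
      field_simp
    · rw [hβ, nrd_smul trd nrd hchar htrd1, h₂, map_mul, map_pow]
      field_simp
  have hβspan : β ∈ Submodule.span F (S : Set B) :=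
    Submodule.smul_mem _ _ (sub_mem (Submodule.subset_span hαS)
      (Submodule.subset_span (S.algebraMap_mem r)))
  obtain ⟨u, v, huv⟩ := Submodule.mem_span_pair.mp (hSα β (hS β hβspan hβint))
  have hcoeffs : algebraMap R F u • (1 : B) + algebraMap R F v • α =
      (-((algebraMap R F π)⁻¹ * algebraMap R F r)) • 1 + (algebraMap R F π)⁻¹ • α := by
    rw [algebraMap_smul, algebraMap_smul, huv, hβ, IsScalarTower.algebraMap_apply R F B,
      Algebra.algebraMap_eq_smul_one (algebraMap R F r)]
    module
  have hπv : algebraMap R F (π * v) = algebraMap R F 1 := by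
    rw [map_mul, (hα.eq_of_pair hcoeffs).2, mul_inv_cancel₀ hπF, map_one]
  exact hπ.not_isUnit (IsUnit.of_mul_eq_one v (IsFractionRing.injective R F hπv))

end Integrality

theorem Module.Basis.linearIndependent_pair_of_isUnit_repr {R M : Type*} [CommRing R]
    [AddCommGroup M] [Module R M] (b : Basis (Fin 2) R M) {e : M} (he : IsUnit (b.repr e 0)) :
    LinearIndependent R ![e, b 1] ∧ Submodule.span R {e, b 1} = ⊤ := by
  have hrepr := b.sum_repr e
  rw [Fin.sum_univ_two] at hrepr
  constructor
  · refine LinearIndependent.pair_iff.mpr fun s t hst => ?_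
    have hs : s = 0 := by
      simpa [he.mul_left_eq_zero] using congrArg (fun x => b.repr x 0) hst
    subst hs
    simpa using congrArg (fun x => b.repr x 1) hst
  · obtain ⟨u, hu⟩ := he
    have hb0 : b 0 = u⁻¹ • (e - b.repr e 1 • b 1) := by
      rw [← eq_sub_of_add_eq hrepr, ← hu, ← Units.smul_def, inv_smul_smul]
    rw [eq_top_iff, ← b.span_eq, Submodule.span_le]
    rintro _ ⟨i, rfl⟩
    fin_cases i
    · rw [Fin.zero_eta, hb0]
      exact Submodule.smul_mem _ _ (sub_mem (Submodule.subset_span (by simp))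
        (Submodule.smul_mem _ _ (Submodule.subset_span (by simp))))
    · exact Submodule.subset_span (by simp)

section DVR

variable {R : Type*} [CommRing R] [IsDomain R] [IsDiscreteValuationRing R] {π : R}

theorem Irreducible.dvd_of_not_isUnit (hπ : Irreducible π) {x : R} (hx : ¬IsUnit x) : π ∣ x := by
  rw [← Ideal.mem_span_singleton, ← hπ.maximalIdeal_eq]
  exact (IsLocalRing.mem_maximalIdeal x).mpr hx

theorem Module.Basis.exists_isUnit_repr_of_forall_smul_ne {M ι : Type*} [AddCommGroup M]
    [Module R M] [Fintype ι] (b : Basis ι R M) (hπ : Irreducible π) {e : M}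
    (he : ∀ x : M, π • x ≠ e) : ∃ i, IsUnit (b.repr e i) := by
  by_contra! h
  choose c hc using fun i => hπ.dvd_of_not_isUnit (h i)
  refine he (∑ i, c i • b i) ?_
  conv_rhs => rw [← b.sum_repr e]
  simp only [Finset.smul_sum, smul_smul, hc]

theorem Subalgebra.exists_linearIndependent_one_of_finrank_eq_two {B : Type*} [Ring B]
    [Algebra R B] (S : Subalgebra R B) [Module.Free R S] (hS : Module.finrank R S = 2)
    (hπ : Irreducible π) (h1 : ∀ x ∈ S, π • x ≠ 1) :
    ∃ α ∈ S, LinearIndependent R ![1, α] ∧ ∀ x ∈ S, x ∈ Submodule.span R {1, α} := by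
  have : Module.Finite R S := Module.finite_of_finrank_pos (by omega)
  let b := Module.finBasisOfFinrankEq R S hS
  obtain ⟨i, hi⟩ := b.exists_isUnit_repr_of_forall_smul_ne hπ (e := 1)
    fun x hx => h1 x x.2 (congrArg Subtype.val hx)
  let b' := b.reindex (Equiv.swap i 0)
  obtain ⟨hli, hspan⟩ :=
    b'.linearIndependent_pair_of_isUnit_repr (e := 1) (by simpa [b'] using hi)
  refine ⟨b' 1, (b' 1).2, ?_, fun x hx => ?_⟩
  · refine LinearIndependent.pair_iff.mpr fun s t hst => LinearIndependent.pair_iff.mp hli s t ?_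
    exact Subtype.ext (by simpa using hst)
  · have hx' : (⟨x, hx⟩ : S) ∈ Submodule.span R {1, b' 1} := hspan ▸ Submodule.mem_top
    obtain ⟨p, q, hpq⟩ := Submodule.mem_span_pair.mp hx'
    exact Submodule.mem_span_pair.mpr ⟨p, q, by simpa using congrArg Subtype.val hpq⟩

variable {F B : Type*} [Field F] [Algebra R F] [IsFractionRing R F]
  [Ring B] [Nontrivial B] [Algebra F B] [Algebra R B] [IsScalarTower R F B]
  (trd : B →ₗ[F] F) (nrd : B → F)
  (hchar : ∀ α : B, α ^ 2 - algebraMap F B (trd α) * α + algebraMap F B (nrd α) = 0)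
  (htrd1 : trd 1 = 2)

include hchar htrd1 in
theorem exists_dvd_trd_sub_and_dvd_nrd_sub (hπ : Irreducible π) {α : B} (hα : IsIntegral R α)
    {c d : F} (hβ : IsIntegral R (algebraMap F B c + d • α)) (hd : d ∉ (algebraMap R F).range) :
    ∃ r : R, (∃ s : R, trd (α - algebraMap R B r) = algebraMap R F (π * s)) ∧
      (∃ s : R, nrd (α - algebraMap R B r) = algebraMap R F (π ^ 2 * s)) := by
  obtain ⟨⟨t, ht⟩, ⟨n, hn⟩⟩ := (isIntegral_iff_trd_mem_and_nrd_mem trd nrd hchar htrd1 α).mp hα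
  obtain ⟨⟨T, hT⟩, ⟨N, hN⟩⟩ := (isIntegral_iff_trd_mem_and_nrd_mem trd nrd hchar htrd1 _).mp hβ
  rw [trd_algebraMap_add_smul trd htrd1, ← ht] at hT
  rw [nrd_algebraMap_add_smul trd nrd hchar htrd1, ← ht, ← hn] at hN
  have hd0 : d ≠ 0 := by rintro rfl; exact hd ⟨0, map_zero _⟩
  obtain ⟨e, he⟩ : ∃ e : R, algebraMap R F e = d⁻¹ :=
    (ValuationRing.isInteger_or_isInteger R d).resolve_left hd
  have hde : d * algebraMap R F e = 1 := by rw [he, mul_inv_cancel₀ hd0]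
  obtain ⟨e', he'⟩ : π ∣ e := by
    refine hπ.dvd_of_not_isUnit fun ⟨u, hu⟩ => hd ⟨↑u⁻¹, ?_⟩
    rw [map_units_inv, hu, he, inv_inv]
  -- For `r = -e c` one has `α - r = e • (c + d α)`, so `nrd (α - r) = e² N`: this is `key`.
  have key : (c * algebraMap R F e) ^ 2 + algebraMap R F t * (c * algebraMap R F e)
      + algebraMap R F n = algebraMap R F e ^ 2 * algebraMap R F N := by
    rw [hN]
    linear_combination (-(algebraMap R F t * c * algebraMap R F e)
      - algebraMap R F n * (1 + d * algebraMap R F e)) * hde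
  obtain ⟨r, hr⟩ : ∃ r : R, algebraMap R F r = -(c * algebraMap R F e) := by
    refine IsIntegrallyClosed.isIntegral_iff.mp (isIntegral_of_sq_sub_mul_add_eq_zero
      (a := t) (b := n - e ^ 2 * N) ?_)
    rw [map_sub, map_mul, map_pow]
    linear_combination key
  refine ⟨r, ⟨e' * T, ?_⟩, ⟨e' ^ 2 * N, ?_⟩⟩
  · rw [IsScalarTower.algebraMap_apply R F B, trd_sub_algebraMap trd htrd1, hr, ← ht,
      ← mul_assoc, ← he', map_mul, hT]
    linear_combination (-algebraMap R F t) * hde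
  · rw [IsScalarTower.algebraMap_apply R F B, nrd_sub_algebraMap trd nrd hchar htrd1, hr, ← ht,
      ← hn, ← mul_assoc, ← mul_pow, ← he', map_mul, map_pow]
    linear_combination key

include hchar htrd1 in
theorem mem_range_of_isIntegral_algebraMap_add_smul (hπ : Irreducible π) {α : B}
    (hα : IsIntegral R α)
    (hcond : ∀ r : R, (¬ ∃ s : R, trd (α - algebraMap R B r) = algebraMap R F (π * s)) ∨
      (¬ ∃ s : R, nrd (α - algebraMap R B r) = algebraMap R F (π ^ 2 * s)))
    {c d : F} (hβ : IsIntegral R (algebraMap F B c + d • α)) :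
    c ∈ (algebraMap R F).range ∧ d ∈ (algebraMap R F).range := by
  obtain ⟨d, rfl⟩ : d ∈ (algebraMap R F).range := by
    by_contra hd
    obtain ⟨r, h₁, h₂⟩ := exists_dvd_trd_sub_and_dvd_nrd_sub trd nrd hchar htrd1 hπ hα hβ hd
    exact (hcond r).elim (· h₁) (· h₂)
  refine ⟨?_, d, rfl⟩
  obtain ⟨⟨t, ht⟩, ⟨n, hn⟩⟩ := (isIntegral_iff_trd_mem_and_nrd_mem trd nrd hchar htrd1 α).mp hα
  obtain ⟨-, ⟨N, hN⟩⟩ := (isIntegral_iff_trd_mem_and_nrd_mem trd nrd hchar htrd1 _).mp hβ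
  rw [nrd_algebraMap_add_smul trd nrd hchar htrd1, ← ht, ← hn] at hN
  refine IsIntegrallyClosed.isIntegral_iff.mp (isIntegral_of_sq_sub_mul_add_eq_zero
    (a := -(d * t)) (b := d ^ 2 * n - N) ?_)
  simp only [map_neg, map_mul, map_sub, map_pow]
  linear_combination (-1 : F) * hN

include hchar htrd1 in
theorem notMem_range_algebraMap_of_forall_not_dvd {α : B} (hα : IsIntegral R α)
    (hcond : ∀ r : R, (¬ ∃ s : R, trd (α - algebraMap R B r) = algebraMap R F (π * s)) ∨
      (¬ ∃ s : R, nrd (α - algebraMap R B r) = algebraMap R F (π ^ 2 * s))) :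
    α ∉ Set.range (algebraMap F B) := by
  rintro ⟨c, rfl⟩
  obtain ⟨r, rfl⟩ := IsIntegrallyClosed.isIntegral_iff.mp
    ((isIntegral_algebraMap_iff (FaithfulSMul.algebraMap_injective F B)).mp hα)
  have h0 : algebraMap F B (algebraMap R F r) - algebraMap R B r = 0 := by
    rw [IsScalarTower.algebraMap_apply R F B, sub_self]
  rcases hcond r with h | h
  · exact h ⟨0, by rw [h0, map_zero, mul_zero, map_zero]⟩
  · refine h ⟨0, ?_⟩
    rw [h0, mul_zero, map_zero, ← zero_smul F (0 : B), nrd_smul trd nrd hchar htrd1]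
    ring

include hchar htrd1 in
theorem isBasicOrder_of_forall_not_dvd (hπ : Irreducible π) {O : Subalgebra R B}
    (hO : ∀ x ∈ O, IsIntegral R x) {α : B} (hαO : α ∈ O)
    (hcond : ∀ r : R, (¬ ∃ s : R, trd (α - algebraMap R B r) = algebraMap R F (π * s)) ∨
      (¬ ∃ s : R, nrd (α - algebraMap R B r) = algebraMap R F (π ^ 2 * s))) :
    IsBasicOrder R F B O := by
  have hα := hO α hαO
  have hαF := notMem_range_algebraMap_of_forall_not_dvd trd nrd hchar htrd1 hα hcond
  have hli : LinearIndependent R ![1, α] :=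
    (linearIndependent_one_of_notMem_range hαF).restrict_scalars' R
  obtain ⟨⟨t, ht⟩, ⟨n, hn⟩⟩ := (isIntegral_iff_trd_mem_and_nrd_mem trd nrd hchar htrd1 α).mp hα
  have hαα : α * α ∈ Submodule.span R {1, α} := by
    refine Submodule.mem_span_pair.mpr ⟨-n, t, ?_⟩
    rw [← sq, sq_eq_trd_smul_sub_nrd_smul trd nrd hchar, ← ht, ← hn, algebraMap_smul,
      algebraMap_smul]
    module
  have hS := toSubmodule_adjoin_singleton_eq_span_pair hαα
  let b : Module.Basis (Fin 2) R (Algebra.adjoin R {α}) :=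
    ((Module.Basis.span hli).map (LinearEquiv.ofEq _ _
      (by rw [hS, Matrix.range_cons_cons_empty]))).map (Subalgebra.toSubmoduleEquiv _)
  refine ⟨Algebra.adjoin R {α}, Algebra.adjoin_le (by simpa using hαO), fun x hx y hy => ?_,
    Module.Free.of_basis b, by simp [Module.finrank_eq_card_basis b], fun β hβ hβint => ?_⟩
  · exact (Algebra.commute_of_mem_adjoin_singleton_of_commute hy
      (Algebra.commute_of_mem_adjoin_self hx).symm).eq
  · have hβ' : β ∈ Submodule.span F {1, α} := by
      refine Submodule.span_le.mpr (fun x hx => ?_) hβ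
      exact Submodule.span_subset_span R F _ (hS ▸ hx)
    obtain ⟨c, d, rfl⟩ := Submodule.mem_span_pair.mp hβ'
    rw [← Algebra.algebraMap_eq_smul_one] at hβint
    obtain ⟨⟨c, rfl⟩, ⟨d, rfl⟩⟩ :=
      mem_range_of_isIntegral_algebraMap_add_smul trd nrd hchar htrd1 hπ hα hcond hβint
    rw [← Subalgebra.mem_toSubmodule, hS, algebraMap_smul, algebraMap_smul]
    exact Submodule.mem_span_pair.mpr ⟨c, d, rfl⟩

include hchar htrd1 in
theorem exists_forall_not_dvd_of_isBasicOrder (hπ : Irreducible π) {O : Subalgebra R B}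
    (hO : ∀ x ∈ O, IsIntegral R x) (h : IsBasicOrder R F B O) :
    ∃ α ∈ O, ∀ r : R, (¬ ∃ s : R, trd (α - algebraMap R B r) = algebraMap R F (π * s)) ∨
      (¬ ∃ s : R, nrd (α - algebraMap R B r) = algebraMap R F (π ^ 2 * s)) := by
  obtain ⟨S, hSO, -, hfree, hrank, hS⟩ := h
  obtain ⟨α, hαS, hli, hSα⟩ := S.exists_linearIndependent_one_of_finrank_eq_two hrank hπ
    fun x hx h1 => hπ.not_isUnit (isUnit_of_smul_eq_one_of_isIntegral (hO x (hSO hx))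
      ((algebraMap_smul F π x).trans h1))
  exact ⟨α, hSO hαS, not_dvd_trd_sub_or_not_dvd_nrd_sub trd nrd hchar htrd1 S hS hαS hSα
    ((LinearIndependent.iff_fractionRing R F).mp hli) hπ⟩

end DVR

theorem stmt_0_general (R F B : Type*) [CommRing R] [IsDomain R] [IsDiscreteValuationRing R]
    [Field F] [Algebra R F] [IsFractionRing R F]
    [Ring B] [Algebra F B] [Algebra R B] [IsScalarTower R F B]
    [IsSimpleRing B]
    (π : R) (hπ : Irreducible π)
    (trd : B →ₗ[F] F) (nrd : B → F)
    (hchar : ∀ α : B, α ^ 2 - algebraMap F B (trd α) * α + algebraMap F B (nrd α) = 0)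
    (htrd1 : trd 1 = 2)
    (O : Subalgebra R B) (hO : IsQuaternionOrder R F B O) :
    IsBasicOrder R F B O ↔
      ∃ α ∈ O, ∀ r : R,
        (¬ ∃ s : R, trd (α - algebraMap R B r) = algebraMap R F (π * s)) ∨
        (¬ ∃ s : R, nrd (α - algebraMap R B r) = algebraMap R F (π ^ 2 * s)) := by
  have hOint (x : B) (hx : x ∈ O) : IsIntegral R x :=
    IsIntegral.of_mem_of_fg O (Module.Finite.iff_fg.mp hO.1) x hx
  exact ⟨exists_forall_not_dvd_of_isBasicOrder trd nrd hchar htrd1 hπ hOint,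
    fun ⟨α, hαO, hcond⟩ => isBasicOrder_of_forall_not_dvd trd nrd hchar htrd1 hπ hOint hαO hcond⟩

/-- over a DVR `R` with uniformizer `π`, a quaternion order `O ⊆ B` is basic
iff there is `α ∈ O` such that for all `r ∈ R`, `π ∤ trd(α - r)` or `π² ∤ nrd(α - r)`. -/
theorem stmt_0 (R F B : Type*) [CommRing R] [IsDomain R] [IsDiscreteValuationRing R]
    [Field F] [Algebra R F] [IsFractionRing R F]
    [Ring B] [Algebra F B] [Algebra R B] [IsScalarTower R F B]
    [Algebra.IsCentral F B] [IsSimpleRing B] (hB : Module.finrank F B = 4)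
    (π : R) (hπ : Irreducible π)
    (trd : B →ₗ[F] F) (nrd : B → F)
    (hchar : ∀ α : B, α ^ 2 - algebraMap F B (trd α) * α + algebraMap F B (nrd α) = 0)
    (htrd1 : trd 1 = 2)
    (O : Subalgebra R B) (hO : IsQuaternionOrder R F B O) :
    IsBasicOrder R F B O ↔
      ∃ α ∈ O, ∀ r : R,
        (¬ ∃ s : R, trd (α - algebraMap R B r) = algebraMap R F (π * s)) ∨
        (¬ ∃ s : R, nrd (α - algebraMap R B r) = algebraMap R F (π ^ 2 * s)) :=
  stmt_0_general R F B π hπ trd nrd hchar htrd1 O hO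
end

section
/- Let R be a DVR with maximal ideal p = πR, B a quaternion algebra over Frac(R), and O ⊆ B an R-order that is a local ring. Then every α in the Jacobson radical of O satisfies π ∣ trd(α), π ∣ nrd(α), and α² ∈ pO. -/
open Polynomial

theorem IsLocalRing.isUnit_sub_of_isUnit_of_not_isUnit {S : Type*} [Ring S] [IsLocalRing S]
    {a b : S} (ha : IsUnit a) (hb : ¬ IsUnit b) : IsUnit (a - b) :=
  (IsLocalRing.isUnit_or_isUnit_of_isUnit_add (by rwa [sub_add_cancel])).resolve_right hb

theorem Irreducible.dvd_of_not_isUnit_s3 {R : Type*} [CommRing R] [IsDomain R]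
    [IsDiscreteValuationRing R] {π r : R} (hπ : Irreducible π) (hr : ¬ IsUnit r) : π ∣ r := by
  rw [← Ideal.mem_span_singleton, ← hπ.maximalIdeal_eq]
  exact hr

section MulAlgebraMapSub

variable {R O : Type*} [CommRing R] [Ring O] [Algebra R O] {α : O} {t n : R}

theorem mul_algebraMap_sub_eq_algebraMap_of_sq_sub_add_eq_zero
    (h : α ^ 2 - algebraMap R O t * α + algebraMap R O n = 0) :
    α * (algebraMap R O t - α) = algebraMap R O n := by
  rw [mul_sub, ← Algebra.commutes, ← sq, ← sub_eq_zero, ← neg_eq_zero, ← h]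
  abel

theorem isUnit_of_mul_algebraMap_sub_eq_algebraMap
    (h : α * (algebraMap R O t - α) = algebraMap R O n) (hn : IsUnit n) : IsUnit α :=
  ((((Algebra.commute_algebraMap_right t α).sub_right (Commute.refl α)).isUnit_mul_iff).mp
    (h ▸ hn.map _)).1

theorem sq_eq_of_mul_algebraMap_sub_eq_algebraMap
    (h : α * (algebraMap R O t - α) = algebraMap R O n) : α ^ 2 = t • α - n • 1 := by
  rw [Algebra.smul_def, Algebra.smul_def, mul_one, ← h, mul_sub, ← Algebra.commutes, sq,
    sub_sub_cancel]

theorem Irreducible.dvd_and_dvd_or_exists_eq_mul_of_mul_algebraMap_sub_eq_algebraMap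
    [IsDomain R] [IsDiscreteValuationRing R] [IsLocalRing O] {π : R} (hπ : Irreducible π)
    (hα : ¬ IsUnit α) (h : α * (algebraMap R O t - α) = algebraMap R O n) :
    π ∣ n ∧ (π ∣ t ∨ ∃ β : O, α = algebraMap R O π * β) := by
  obtain ⟨s, rfl⟩ : π ∣ n :=
    hπ.dvd_of_not_isUnit_s3 fun hn => hα (isUnit_of_mul_algebraMap_sub_eq_algebraMap h hn)
  refine ⟨dvd_mul_right π s, or_iff_not_imp_left.mpr fun hπt => ?_⟩
  have ht : IsUnit t := by_contra fun ht => hπt (hπ.dvd_of_not_isUnit_s3 ht)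
  obtain ⟨u, hu⟩ := IsLocalRing.isUnit_sub_of_isUnit_of_not_isUnit (ht.map (algebraMap R O)) hα
  refine ⟨algebraMap R O s * ↑u⁻¹, ?_⟩
  rw [← mul_assoc, ← map_mul, ← h, ← hu, Units.mul_inv_cancel_right]

end MulAlgebraMapSub

section Integrality

variable {R F B : Type*} [CommRing R] [IsIntegrallyClosed R]
  [Field F] [Algebra R F] [IsFractionRing R F]
  [Ring B] [Algebra F B] [Algebra R B] [IsScalarTower R F B]

theorem minpoly_coeff_mem_range_of_isIntegral {γ : B} (hγ : IsIntegral R γ) (i : ℕ) :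
    (minpoly F γ).coeff i ∈ (algebraMap R F).range := by
  obtain ⟨g, hg⟩ := IsIntegrallyClosed.eq_map_mul_C_of_dvd F (minpoly.monic hγ)
    (minpoly.dvd_map_of_isScalarTower R F γ)
  rw [(minpoly.monic hγ.tower_top).leadingCoeff, C_1, mul_one] at hg
  exact ⟨g.coeff i, by rw [← coeff_map, hg]⟩

variable [Nontrivial B]

theorem minpoly_eq_of_sq_sub_mul_add_eq_zero {γ : B} (hγ : IsIntegral F γ)
    (hγF : γ ∉ (algebraMap F B).range) {t n : F}
    (h : γ ^ 2 - algebraMap F B t * γ + algebraMap F B n = 0) :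
    minpoly F γ = X ^ 2 - C t * X + C n := by
  have hq : (X ^ 2 - C t * X + C n : F[X]).Monic := by monicity!
  have hdeg : (X ^ 2 - C t * X + C n : F[X]).natDegree = 2 := by compute_degree!
  refine (eq_of_monic_of_dvd_of_natDegree_le (minpoly.monic hγ) hq (minpoly.dvd F γ ?_) ?_).symm
  · simpa [Algebra.smul_def] using h
  · rw [hdeg]
    exact (minpoly.two_le_natDegree_iff hγ).mpr hγF

variable (trd : B →ₗ[F] F) (nrd : B → F)
  (hchar : ∀ α : B, α ^ 2 - algebraMap F B (trd α) * α + algebraMap F B (nrd α) = 0)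
  (htrd1 : trd 1 = 2)

include hchar htrd1 in
theorem trd_mem_range_and_nrd_mem_range_of_isIntegral {γ : B} (hγ : IsIntegral R γ) :
    trd γ ∈ (algebraMap R F).range ∧ nrd γ ∈ (algebraMap R F).range := by
  by_cases hγF : γ ∈ (algebraMap F B).range
  · obtain ⟨c, rfl⟩ := hγF
    obtain ⟨c, rfl⟩ : c ∈ (algebraMap R F).range :=
      IsIntegrallyClosed.isIntegral_iff.mp
        ((isIntegral_algHom_iff (IsScalarTower.toAlgHom R F B) (algebraMap F B).injective).mp hγ)
    have htrd : trd (algebraMap F B (algebraMap R F c)) = algebraMap R F (2 * c) := by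
      rw [Algebra.algebraMap_eq_smul_one, map_smul, htrd1, smul_eq_mul, map_mul, map_ofNat,
        mul_comm]
    have hnrd : nrd (algebraMap F B (algebraMap R F c)) = algebraMap R F (c ^ 2) := by
      have h := hchar (algebraMap F B (algebraMap R F c))
      rw [htrd, ← map_pow, ← map_mul, ← map_sub, ← map_add, map_eq_zero_iff _
        (algebraMap F B).injective] at h
      simp only [map_pow, map_mul, map_ofNat] at h ⊢
      linear_combination h
    exact ⟨⟨_, htrd.symm⟩, ⟨_, hnrd.symm⟩⟩
  · have hmin := minpoly_eq_of_sq_sub_mul_add_eq_zero hγ.tower_top hγF (hchar γ)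
    have h1 := minpoly_coeff_mem_range_of_isIntegral (F := F) hγ 1
    have h0 := minpoly_coeff_mem_range_of_isIntegral (F := F) hγ 0
    rw [hmin] at h0 h1
    simpa [coeff_X, coeff_C] using And.intro h1 h0

end Integrality

theorem stmt_3_general (R F B : Type*) [CommRing R] [IsDomain R] [IsDiscreteValuationRing R]
    [Field F] [Algebra R F] [IsFractionRing R F]
    [Ring B] [Algebra F B] [Algebra R B] [IsScalarTower R F B]
    (π : R) (hπ : Irreducible π)
    (trd : B →ₗ[F] F) (nrd : B → F)
    (hchar : ∀ α : B, α ^ 2 - algebraMap F B (trd α) * α + algebraMap F B (nrd α) = 0)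
    (htrd1 : trd 1 = 2)
    (O : Subalgebra R B) (hO : IsQuaternionOrder R F B O)
    (hloc : IsLocalRing O)
    (α : O) (hα : α ∈ Ideal.jacobson (⊥ : Ideal O)) :
    (∃ s : R, trd (α : B) = algebraMap R F (π * s)) ∧
    (∃ s : R, nrd (α : B) = algebraMap R F (π * s)) ∧
    (α : B) ^ 2 ∈ (Ideal.span {π} : Ideal R) • Subalgebra.toSubmodule O := by
  have : Nontrivial B := Subtype.val_injective.nontrivial (α := O)
  have : Module.Finite R O := hO.1
  have trd_nrd_mem (x : O) :
      trd (x : B) ∈ (algebraMap R F).range ∧ nrd (x : B) ∈ (algebraMap R F).range :=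
    trd_mem_range_and_nrd_mem_range_of_isIntegral trd nrd hchar htrd1
      ((Algebra.IsIntegral.isIntegral (R := R) x).map O.val)
  obtain ⟨⟨t, ht⟩, ⟨n, hn⟩⟩ := trd_nrd_mem α
  have hα_nonunit : ¬ IsUnit α := fun hu =>
    bot_ne_top (Ideal.jacobson_eq_top_iff.mp (Ideal.eq_top_of_isUnit_mem _ hα hu))
  have hα_mul : α * (algebraMap R O t - α) = algebraMap R O n := by
    apply Subtype.ext
    have h := mul_algebraMap_sub_eq_algebraMap_of_sq_sub_add_eq_zero (hchar α)
    rwa [← ht, ← hn, ← IsScalarTower.algebraMap_apply, ← IsScalarTower.algebraMap_apply] at h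
  obtain ⟨⟨s, rfl⟩, hπt⟩ :=
    hπ.dvd_and_dvd_or_exists_eq_mul_of_mul_algebraMap_sub_eq_algebraMap hα_nonunit hα_mul
  obtain ⟨a, rfl⟩ : π ∣ t := hπt.elim id fun ⟨β, hβ⟩ => by
    obtain ⟨r, hr⟩ := (trd_nrd_mem β).1
    refine ⟨r, IsFractionRing.injective R F ?_⟩
    rw [ht, hβ, Subalgebra.coe_mul, Subalgebra.coe_algebraMap,
      IsScalarTower.algebraMap_apply R F B, ← Algebra.smul_def, map_smul, smul_eq_mul, ← hr,
      map_mul]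
  have hsq : α ^ 2 = π • (a • α - s • 1) := by
    rw [sq_eq_of_mul_algebraMap_sub_eq_algebraMap hα_mul, smul_sub, smul_smul, smul_smul]
  refine ⟨⟨a, ht.symm⟩, ⟨s, hn.symm⟩, ?_⟩
  rw [← Subalgebra.coe_pow, hsq]
  exact Submodule.smul_mem_smul (Ideal.mem_span_singleton_self π) (a • α - s • 1).2

/-- if `O` is a quaternion order over a DVR that is a local ring, then every
`α` in the Jacobson radical of `O` satisfies `π ∣ trd α`, `π ∣ nrd α`, and `α² ∈ pO`. -/
theorem stmt_3 (R F B : Type*) [CommRing R] [IsDomain R] [IsDiscreteValuationRing R]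
    [Field F] [Algebra R F] [IsFractionRing R F]
    [Ring B] [Algebra F B] [Algebra R B] [IsScalarTower R F B]
    [Algebra.IsCentral F B] [IsSimpleRing B] (hB : Module.finrank F B = 4)
    (π : R) (hπ : Irreducible π)
    (trd : B →ₗ[F] F) (nrd : B → F)
    (hchar : ∀ α : B, α ^ 2 - algebraMap F B (trd α) * α + algebraMap F B (nrd α) = 0)
    (htrd1 : trd 1 = 2)
    (O : Subalgebra R B) (hO : IsQuaternionOrder R F B O)
    (hloc : IsLocalRing O)
    (α : O) (hα : α ∈ Ideal.jacobson (⊥ : Ideal O)) :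
    (∃ s : R, trd (α : B) = algebraMap R F (π * s)) ∧
    (∃ s : R, nrd (α : B) = algebraMap R F (π * s)) ∧
    (α : B) ^ 2 ∈ (Ideal.span {π} : Ideal R) • Subalgebra.toSubmodule O :=
  stmt_3_general R F B π hπ trd nrd hchar htrd1 O hO hloc α hα
end

section
/- Let R be a DVR with fraction field F, B a quaternion algebra over F, and O ⊆ B an R-order that is basic, i.e., contains a maximal quadratic R-order S that is a local ring. Then every O-ideal (full R-lattice I ⊆ B that is a left O-module, respectively right O-module) is generated by two elements as a left (respectively right) O-ideal. -/
/-!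
The `F`-span `K = F S` is a commutative `F`-algebra of dimension at most two. It is reduced, because
`S` is integrally closed in `K` while `F` is not a finite `R`-module, and its only idempotents are
`0` and `1`, because idempotents are integral and `S` is local. Hence `K` is a field, `S` is the
integral closure of `R` in `K`, so a local Dedekind domain, and every nonzero element of `S` is a
unit of `B`. A one-sided `O`-ideal `I` is therefore a finitely generated torsion-free, hence free,
module over the principal ideal domain `S`, and comparing `R`-ranks gives
`2 · rank_S I = rank_R I ≤ dim_F B = 4`. Right ideals are left ideals of `Bᵐᵒᵖ`.
-/

open Module Submodule Polynomial
open scoped IsMulCommutative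

theorem IsIdempotentElem.eq_zero_or_one_of_isLocalRing {A : Type*} [Ring A] [IsLocalRing A]
    {e : A} (he : IsIdempotentElem e) : e = 0 ∨ e = 1 := by
  rcases IsLocalRing.isUnit_or_isUnit_of_add_one (add_sub_cancel e 1) with h | h
  · exact Or.inr (h.mul_left_cancel (by rw [he.eq, mul_one]))
  · exact Or.inl (h.mul_left_cancel (by rw [sub_mul, one_mul, he.eq, sub_self, mul_zero]))

theorem IsPrincipalIdealRing.of_isDedekindDomain_of_isLocalRing (A : Type*) [CommRing A]
    [IsDedekindDomain A] [IsLocalRing A] : IsPrincipalIdealRing A :=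
  .of_finite_maximals <| (Set.finite_singleton (IsLocalRing.maximalIdeal A)).subset
    fun _ hI => IsLocalRing.eq_maximalIdeal hI

theorem IsIntegralClosure.isDedekindDomain_of_finite (R F L C : Type*) [CommRing R]
    [IsDedekindDomain R] [Field F] [Algebra R F] [IsFractionRing R F] [Field L] [Algebra R L]
    [Algebra F L] [IsScalarTower R F L] [FiniteDimensional F L] [CommRing C] [Algebra R C]
    [Algebra C L] [IsScalarTower R C L] [IsIntegralClosure C R L] [Module.Finite R C] :
    IsDedekindDomain C :=
  have : IsDomain C := (IsIntegralClosure.algebraMap_injective C R L).isDomain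
  have : IsFractionRing C L := IsIntegralClosure.isFractionRing_of_finite_extension R F L C
  have : Algebra.IsIntegral R C := IsIntegralClosure.isIntegral_algebra R L
  { isNoetherian_of_tower R inferInstance, Ring.DimensionLEOne.of_isIntegral R C,
    (isIntegrallyClosed_iff L).mpr fun {x} hx =>
      ⟨IsIntegralClosure.mk' C x (isIntegral_trans (R := R) _ hx),
        IsIntegralClosure.algebraMap_mk' _ _ _⟩ with : IsDedekindDomain C }

theorem exists_mul_self_eq_of_finrank_le_two {F L : Type*} [Field F] [Ring L] [Nontrivial L]
    [Algebra F L] [FiniteDimensional F L] (hL : finrank F L ≤ 2) {x : L}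
    (hxF : x ∉ Set.range (algebraMap F L)) : ∃ a b : F, x * x = a • 1 + b • x := by
  have hli : LinearIndependent F ![1, x] := by
    refine LinearIndependent.pair_iff.mpr fun s t hst => ?_
    by_cases ht : t = 0
    · subst ht
      simpa using hst
    · refine absurd ⟨-(s / t), ?_⟩ hxF
      rw [Algebra.algebraMap_eq_smul_one, neg_smul, div_eq_inv_mul, mul_smul, ← smul_neg,
        neg_eq_of_add_eq_zero_right hst, inv_smul_smul₀ ht]
  have hspan : span F (Set.range ![1, x]) = ⊤ := hli.span_eq_top_of_card_eq_finrank' <|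
    le_antisymm (by simpa using hli.fintype_card_le_finrank) (by simpa using hL)
  have := hspan ▸ mem_top (x := x * x)
  rw [Matrix.range_cons, Matrix.range_cons, Matrix.range_empty, Set.union_empty,
    Set.union_singleton, Set.pair_comm, mem_span_pair] at this
  obtain ⟨a, b, hab⟩ := this
  exact ⟨a, b, hab.symm⟩

theorem isField_of_finrank_le_two {F L : Type*} [Field F] [CommRing L] [Nontrivial L]
    [Algebra F L] [FiniteDimensional F L] (hL : finrank F L ≤ 2) [IsReduced L]
    (hidem : ∀ e : L, IsIdempotentElem e → e = 0 ∨ e = 1) : IsField L := by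
  refine ⟨exists_pair_ne L, mul_comm, fun {x} hx => ?_⟩
  suffices IsUnit x from this.exists_right_inv
  by_cases hxF : x ∈ Set.range (algebraMap F L)
  · obtain ⟨f, rfl⟩ := hxF
    exact (IsUnit.mk0 f (by rintro rfl; simp at hx)).map _
  obtain ⟨a, b, hab⟩ := exists_mul_self_eq_of_finrank_le_two hL hxF
  -- For `a ≠ 0`, `x (x - b) = a` inverts `x`; for `a = 0`, `x` is square-zero or `b⁻¹ • x` is
  -- an idempotent other than `0` and `1`.
  by_cases ha : a = 0
  · exfalso
    rw [ha, zero_smul, zero_add] at hab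
    by_cases hb : b = 0
    · exact hx (IsReduced.eq_zero x ⟨2, by rw [sq, hab, hb, zero_smul]⟩)
    have hidem' : IsIdempotentElem (b⁻¹ • x) := by
      rw [IsIdempotentElem, smul_mul_smul_comm, hab, smul_smul, mul_assoc, inv_mul_cancel₀ hb,
        mul_one]
    rcases hidem _ hidem' with h | h
    · exact hx (by simpa [hb] using h)
    · exact hxF ⟨b, by rw [Algebra.algebraMap_eq_smul_one, ← h, smul_inv_smul₀ hb]⟩
  · refine IsUnit.of_mul_eq_one (a⁻¹ • (x - b • 1)) ?_
    rw [mul_smul_comm, mul_sub, mul_smul_comm, mul_one, hab, add_sub_cancel_right, smul_smul,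
      inv_mul_cancel₀ ha, one_smul]

section Lattice

variable {R F B : Type*} [CommRing R] [Field F] [Algebra R F]
  [Ring B] [Algebra F B] [Algebra R B] [IsScalarTower R F B]

theorem IsQuaternionOrder.finiteDimensional {O : Subalgebra R B}
    (hO : IsQuaternionOrder R F B O) : FiniteDimensional F B := by
  obtain ⟨s, hs⟩ := Module.Finite.iff_fg (N := Subalgebra.toSubmodule O) |>.mp hO.1
  refine ⟨⟨s, ?_⟩⟩
  rw [← span_span_of_tower R, hs]
  exact hO.2

theorem IsQuaternionOrder.finite_of_le [IsNoetherianRing R] {O S : Subalgebra R B}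
    (hO : IsQuaternionOrder R F B O) (hSO : S ≤ O) : Module.Finite R S :=
  have := hO.1
  Module.Finite.of_injective (Subalgebra.inclusion hSO).toLinearMap
    (Subalgebra.inclusion_injective hSO)

theorem Submodule.finrank_span_le_finrank [Nontrivial R] (N : Submodule R B) [Module.Free R N]
    [Module.Finite R N] : finrank F (span F (N : Set B)) ≤ finrank R N := by
  let b := Module.finBasis R N
  have hb : span R (Set.range fun i => (b i : B)) = N := by
    have : (Set.range fun i => (b i : B)) = N.subtype '' Set.range b := by
      rw [← Set.range_comp]; rfl
    rw [this, ← map_span, b.span_eq, map_top, range_subtype]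
  have : span F (N : Set B) = span F (Set.range fun i => (b i : B)) := by
    refine le_antisymm ?_ (span_mono (Set.range_subset_iff.2 fun i => (b i).2))
    rw [span_le]
    intro x hx
    rw [← hb] at hx
    exact span_le_restrictScalars R F _ hx
  rw [this]
  exact (finrank_range_le_card (R := F) _).trans (by simp)

variable [IsFractionRing R F]

theorem Submodule.finrank_le_finrank_of_isFractionRing (N : Submodule R B)
    [FiniteDimensional F B] : finrank R N ≤ finrank F B := by
  rw [IsFractionRing.finrank_right_eq R F B]
  refine finrank_le_finrank_of_rank_le_rank (by simpa using N.rank_le) ?_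
  rw [← IsFractionRing.rank_right_eq R F B]
  exact Module.rank_lt_aleph0 F B

theorem eq_zero_of_forall_smul_mem [IsNoetherianRing R] (hR : ¬IsField R) (N : Submodule R B)
    [Module.Finite R N] {x : B} (hx : ∀ f : F, f • x ∈ N) : x = 0 := by
  by_contra hx0
  let φ : F →ₗ[R] N := ((LinearMap.toSpanSingleton F B x).restrictScalars R).codRestrict N hx
  have hφ : Function.Injective φ := fun f g h => smul_left_injective F hx0 (congrArg Subtype.val h)
  have : Module.Finite R F := Module.Finite.of_injective φ hφ
  exact hR (isField_of_isIntegral_of_isField (IsFractionRing.injective R F) (Field.toIsField F))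

end Lattice

section QuadraticOrder

variable {R F B : Type*} [CommRing R] [Field F] [Ring B] [Algebra F B] [Algebra R B]
  (S : Subalgebra R B)

theorem Subalgebra.toSubmodule_adjoin_eq_span :
    Subalgebra.toSubmodule (Algebra.adjoin F (S : Set B)) = span F (S : Set B) :=
  Algebra.adjoin_eq_span_of_subset _ <| by
    rw [show (S : Set B) = (S.toSubmonoid : Set B) from rfl, Submonoid.closure_eq]
    exact subset_span

variable {S} in
theorem Subalgebra.mem_adjoin_iff_mem_span {x : B} :
    x ∈ Algebra.adjoin F (S : Set B) ↔ x ∈ span F (S : Set B) := by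
  rw [← Subalgebra.mem_toSubmodule, S.toSubmodule_adjoin_eq_span]

theorem Subalgebra.eq_zero_or_one_of_isIdempotentElem [IsLocalRing S]
    (hSmax : ∀ β ∈ span F (S : Set B), IsIntegral R β → β ∈ S) {e : B}
    (he : e ∈ span F (S : Set B)) (hee : IsIdempotentElem e) : e = 0 ∨ e = 1 := by
  have heS : e ∈ S := hSmax e he ⟨X ^ 2 - X, monic_X_pow_sub (degree_X_le.trans_lt (by norm_num)),
    by rw [eval₂_sub, eval₂_X_pow, eval₂_X, sq, hee.eq, sub_self]⟩
  have : IsIdempotentElem (⟨e, heS⟩ : S) := Subtype.ext hee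
  exact this.eq_zero_or_one_of_isLocalRing.imp (congrArg Subtype.val) (congrArg Subtype.val)

theorem Subalgebra.isUnit_of_isField_adjoin (hK : IsField (Algebra.adjoin F (S : Set B)))
    {x : B} (hx : x ∈ S) (hx0 : x ≠ 0) : IsUnit x := by
  let _ := hK.toField
  have : (⟨x, Algebra.subset_adjoin hx⟩ : Algebra.adjoin F (S : Set B)) ≠ 0 :=
    fun h => hx0 (congrArg Subtype.val h)
  exact (IsUnit.mk0 _ this).map (Algebra.adjoin F (S : Set B)).val

variable [Algebra R F] [IsScalarTower R F B] [IsFractionRing R F] [Module.Finite R S]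

theorem Subalgebra.isReduced_adjoin [IsNoetherianRing R] (hR : ¬IsField R)
    (hSmax : ∀ β ∈ span F (S : Set B), IsIntegral R β → β ∈ S) :
    IsReduced (Algebra.adjoin F (S : Set B)) where
  eq_zero x hx := by
    refine Subtype.ext <| eq_zero_of_forall_smul_mem (F := F) hR (Subalgebra.toSubmodule S)
      fun f => ?_
    obtain ⟨n, hn⟩ := (hx.map (Algebra.adjoin F (S : Set B)).val).smul f
    exact hSmax _ (Submodule.smul_mem _ f (mem_adjoin_iff_mem_span.mp x.2))
      ⟨X ^ n, monic_X_pow n, by rw [eval₂_X_pow]; exact hn⟩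

theorem Subalgebra.isField_adjoin [Nontrivial R] [IsNoetherianRing R] [IsMulCommutative S]
    [IsLocalRing S] [Module.Free R S] [Nontrivial B] [FiniteDimensional F B] (hR : ¬IsField R)
    (hSrank : finrank R S ≤ 2) (hSmax : ∀ β ∈ span F (S : Set B), IsIntegral R β → β ∈ S) :
    IsField (Algebra.adjoin F (S : Set B)) := by
  have := S.isReduced_adjoin hR hSmax
  refine isField_of_finrank_le_two (F := F) ?_ fun e he => ?_
  · rw [← Subalgebra.finrank_toSubmodule, S.toSubmodule_adjoin_eq_span]
    exact ((Subalgebra.toSubmodule S).finrank_span_le_finrank).trans hSrank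
  · exact (S.eq_zero_or_one_of_isIdempotentElem hSmax (mem_adjoin_iff_mem_span.mp e.2)
      (congrArg Subtype.val he)).imp Subtype.ext Subtype.ext

theorem Subalgebra.isDedekindDomain_of_isField_adjoin [IsDedekindDomain R] [IsMulCommutative S]
    [FiniteDimensional F B] (hSmax : ∀ β ∈ span F (S : Set B), IsIntegral R β → β ∈ S)
    (hK : IsField (Algebra.adjoin F (S : Set B))) : IsDedekindDomain S := by
  let K := Algebra.adjoin F (S : Set B)
  let ι : S →+* K :=
    { toFun := fun s => ⟨s, Algebra.subset_adjoin s.2⟩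
      map_one' := rfl
      map_mul' := fun _ _ => rfl
      map_zero' := rfl
      map_add' := fun _ _ => rfl }
  let _ : Algebra S K := ι.toAlgebra
  let _ := hK.toField
  have : IsScalarTower R S K := .of_algebraMap_eq fun _ => rfl
  have : IsIntegralClosure S R K := by
    refine ⟨fun _ _ h => Subtype.ext (congrArg (fun k : K => (k : B)) h),
      fun {x} => ⟨fun hx => ?_, ?_⟩⟩
    · exact ⟨⟨x, hSmax x (mem_adjoin_iff_mem_span.mp x.2) (hx.map (K.val.restrictScalars R))⟩,
        rfl⟩
    · rintro ⟨y, rfl⟩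
      exact (Algebra.IsIntegral.isIntegral y).algebraMap
  exact IsIntegralClosure.isDedekindDomain_of_finite R F K S

end QuadraticOrder

section Generators

variable {R C : Type*} [CommRing R] [Nontrivial R] [CommRing C] [Algebra R C]

theorem Module.exists_span_pair_eq_top_of_finrank_le_two [Nontrivial C] {M : Type*}
    [AddCommGroup M] [Module C M] [Module.Free C M] [Module.Finite C M] (h : finrank C M ≤ 2) :
    ∃ x y : M, span C {x, y} = ⊤ := by
  let b := Module.finBasis C M
  let v : Fin 2 → M := Function.extend (Fin.castLE h) b 0
  refine ⟨v 0, v 1, eq_top_iff.mpr (b.span_eq ▸ span_le.mpr ?_)⟩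
  rintro _ ⟨i, rfl⟩
  have hv : ∀ j, v j ∈ ({v 0, v 1} : Set M) := Fin.forall_fin_two.mpr ⟨Or.inl rfl, Or.inr rfl⟩
  rw [← (Fin.castLE_injective h).extend_apply b 0 i]
  exact subset_span (hv _)

theorem Module.exists_span_pair_eq_top_of_finrank_le [IsDomain C] [IsPrincipalIdealRing C]
    [Module.Free R C] {M : Type*} [AddCommGroup M] [Module R M] [Module C M]
    [IsScalarTower R C M] [Module.Finite R M] [IsTorsionFree C M] (hC : 0 < finrank R C)
    (hM : finrank R M ≤ 2 * finrank R C) : ∃ x y : M, span C {x, y} = ⊤ := by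
  have : Module.Finite C M := Module.Finite.of_restrictScalars_finite R C M
  refine exists_span_pair_eq_top_of_finrank_le_two ?_
  have := Module.finrank_mul_finrank R C M
  nlinarith

theorem Submodule.exists_two_generators_of_mul_left_mem [IsDomain C] [IsPrincipalIdealRing C]
    [Module.Free R C] {A : Type*} [Ring A] [Algebra R A] (φ : C →ₐ[R] A)
    (hφ : ∀ c, c ≠ 0 → IsUnit (φ c)) (I : Submodule R A) [Module.Finite R I]
    (hI : ∀ c, ∀ x ∈ I, φ c * x ∈ I) (hC : 0 < finrank R C)
    (hrank : finrank R I ≤ 2 * finrank R C) :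
    ∃ x ∈ I, ∃ y ∈ I, ∀ z ∈ I, ∃ a b : C, z = φ a * x + φ b * y := by
  let _ : Module C A := Module.compHom A φ.toRingHom
  have : IsScalarTower R C A := ⟨fun r c a => by
    change φ (r • c) * a = r • (φ c * a)
    rw [map_smul, smul_mul_assoc]⟩
  let J : Submodule C A := { I with smul_mem' := hI }
  have : Module.Finite R J := ‹Module.Finite R I›
  have : IsTorsionFree C J := ⟨fun c hc x y hxy =>
    Subtype.ext ((hφ c hc.ne_zero).mul_left_cancel (congrArg Subtype.val hxy))⟩
  obtain ⟨x, y, hxy⟩ := Module.exists_span_pair_eq_top_of_finrank_le (M := J) hC hrank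
  refine ⟨x, x.2, y, y.2, fun z hz => ?_⟩
  obtain ⟨a, b, hab⟩ := mem_span_pair.mp (hxy ▸ mem_top : (⟨z, hz⟩ : J) ∈ span C {x, y})
  exact ⟨a, b, (congrArg Subtype.val hab).symm⟩

theorem Submodule.exists_two_generators_of_mul_right_mem [IsDomain C] [IsPrincipalIdealRing C]
    [Module.Free R C] {A : Type*} [Ring A] [Algebra R A] (φ : C →ₐ[R] A)
    (hφ : ∀ c, c ≠ 0 → IsUnit (φ c)) (I : Submodule R A) [Module.Finite R I]
    (hI : ∀ c, ∀ x ∈ I, x * φ c ∈ I) (hC : 0 < finrank R C)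
    (hrank : finrank R I ≤ 2 * finrank R C) :
    ∃ x ∈ I, ∃ y ∈ I, ∀ z ∈ I, ∃ a b : C, z = x * φ a + y * φ b := by
  let e : A ≃ₗ[R] Aᵐᵒᵖ := MulOpposite.opLinearEquiv R
  let J := I.map (e : A →ₗ[R] Aᵐᵒᵖ)
  have hrank' : finrank R J ≤ 2 * finrank R C := by rwa [e.finrank_map_eq]
  obtain ⟨x, hx, y, hy, h⟩ := J.exists_two_generators_of_mul_left_mem
    (φ.toOpposite fun c d => (Commute.all c d).map φ) (fun c hc => (hφ c hc).op)
    (fun c x hx => (mem_map_equiv _).mpr (hI c _ ((mem_map_equiv _).mp hx))) hC hrank'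
  refine ⟨x.unop, (mem_map_equiv _).mp hx, y.unop, (mem_map_equiv _).mp hy, fun z hz => ?_⟩
  obtain ⟨a, b, hab⟩ := h (MulOpposite.op z) ((mem_map_equiv _).mpr hz)
  exact ⟨a, b, congrArg MulOpposite.unop hab⟩

end Generators

theorem stmt_8_general (R F B : Type*) [CommRing R] [IsDomain R] [IsDiscreteValuationRing R]
    [Field F] [Algebra R F] [IsFractionRing R F]
    [Ring B] [Algebra F B] [Algebra R B] [IsScalarTower R F B]
    (hB : Module.finrank F B = 4)
    (O : Subalgebra R B) (hO : IsQuaternionOrder R F B O)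
    (S : Subalgebra R B) (hSO : S ≤ O)
    (hScomm : ∀ x ∈ S, ∀ y ∈ S, x * y = y * x)
    (hSfree : Module.Free R S) (hSrank : Module.finrank R S = 2)
    (hSmax : ∀ β ∈ Submodule.span F (S : Set B), IsIntegral R β → β ∈ S)
    (hSloc : IsLocalRing S)
    (I : Submodule R B) (hIfin : Module.Finite R I) :
    ((∀ a ∈ O, ∀ x ∈ I, a * x ∈ I) →
      ∃ x ∈ I, ∃ y ∈ I, ∀ z ∈ I, ∃ a ∈ O, ∃ b ∈ O, z = a * x + b * y) ∧
    ((∀ a ∈ O, ∀ x ∈ I, x * a ∈ I) →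
      ∃ x ∈ I, ∃ y ∈ I, ∀ z ∈ I, ∃ a ∈ O, ∃ b ∈ O, z = x * a + y * b) := by
  have := hO.finiteDimensional
  have : Module.Finite R S := hO.finite_of_le hSO
  have : Nontrivial B := Module.nontrivial_of_finrank_pos (R := F) (by omega)
  have : IsMulCommutative S := .of_setLike_mul_comm hScomm
  have hK := S.isField_adjoin (IsDiscreteValuationRing.not_isField R) hSrank.le hSmax
  have := S.isDedekindDomain_of_isField_adjoin hSmax hK
  have := IsPrincipalIdealRing.of_isDedekindDomain_of_isLocalRing S
  have hunit (s : S) (hs : s ≠ 0) : IsUnit (S.val s) :=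
    S.isUnit_of_isField_adjoin hK s.2 fun h => hs (Subtype.ext h)
  have hpos : 0 < finrank R S := by omega
  have hrank : finrank R I ≤ 2 * finrank R S := by
    rw [hSrank]
    exact (I.finrank_le_finrank_of_isFractionRing (F := F)).trans hB.le
  refine ⟨fun hleft => ?_, fun hright => ?_⟩
  · obtain ⟨x, hx, y, hy, h⟩ := I.exists_two_generators_of_mul_left_mem S.val hunit
      (fun s => hleft s (hSO s.2)) hpos hrank
    exact ⟨x, hx, y, hy, fun z hz => let ⟨a, b, hab⟩ := h z hz; ⟨a, hSO a.2, b, hSO b.2, hab⟩⟩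
  · obtain ⟨x, hx, y, hy, h⟩ := I.exists_two_generators_of_mul_right_mem S.val hunit
      (fun s x hx => hright s (hSO s.2) x hx) hpos hrank
    exact ⟨x, hx, y, hy, fun z hz => let ⟨a, b, hab⟩ := h z hz; ⟨a, hSO a.2, b, hSO b.2, hab⟩⟩

/-- if a quaternion order `O` over a DVR contains a maximal (integrally
closed) quadratic `R`-order `S` that is a local ring, then every left (resp. right)
`O`-ideal is generated by two elements. -/
theorem stmt_8 (R F B : Type*) [CommRing R] [IsDomain R] [IsDiscreteValuationRing R]
    [Field F] [Algebra R F] [IsFractionRing R F]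
    [Ring B] [Algebra F B] [Algebra R B] [IsScalarTower R F B]
    [Algebra.IsCentral F B] [IsSimpleRing B] (hB : Module.finrank F B = 4)
    (O : Subalgebra R B) (hO : IsQuaternionOrder R F B O)
    (S : Subalgebra R B) (hSO : S ≤ O)
    (hScomm : ∀ x ∈ S, ∀ y ∈ S, x * y = y * x)
    (hSfree : Module.Free R S) (hSrank : Module.finrank R S = 2)
    (hSmax : ∀ β ∈ Submodule.span F (S : Set B), IsIntegral R β → β ∈ S)
    (hSloc : IsLocalRing S)
    (I : Submodule R B) (hIfin : Module.Finite R I)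
    (hIfull : Submodule.span F (I : Set B) = ⊤) :
    ((∀ a ∈ O, ∀ x ∈ I, a * x ∈ I) →
      ∃ x ∈ I, ∃ y ∈ I, ∀ z ∈ I, ∃ a ∈ O, ∃ b ∈ O, z = a * x + b * y) ∧
    ((∀ a ∈ O, ∀ x ∈ I, x * a ∈ I) →
      ∃ x ∈ I, ∃ y ∈ I, ∀ z ∈ I, ∃ a ∈ O, ∃ b ∈ O, z = x * a + y * b) :=
  stmt_8_general R F B hB O hO S hSO hScomm hSfree hSrank hSmax hSloc I hIfin
end

section
/- Let R be a DVR and O a Gorenstein quaternion R-order, corresponding under the Clifford correspondence to a ternary quadratic form Q(x,y,z) = ax² + by² + cz² + uyz + vxz + wxy with coefficients a,b,c,u,v,w ∈ R not all in the maximal ideal p. Suppose O is not basic. Then: (a) if the residue characteristic divides 2 (π ∣ 2), then π ∣ u, π ∣ v, and π ∣ w; and (b) if π ∣ u, v, w and s ∈ {a,b,c} satisfies π ∣ s, then π² ∣ s. -/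
/-! For `α ∈ {i, j, k}` we have `α² = tα - n` with `(t, n) = (u, bc), (v, ac), (w, ab)`. If no
`r ∈ R` satisfies `π ∣ t - 2r` and `π² ∣ n - rt + r²`, then `R[α] = R + Rα` is integrally closed
in `F[α]`, so `O` is basic. Indeed, an integral `β = x + yα` has trace `T = 2x + yt` and norm
`N = x² + xyt + y²n` in `R`; if `y ∉ R` then `1/y ∈ πR`, `x/y` is a root of the monic
`X² + tX + (n - N/y²)` and hence lies in `R`, and `r = -x/y` gives `t - 2r = T/y` and
`n - rt + r² = N/y²`. Once such an `r` exists for `i`, `j`, `k`: if `π ∣ 2` then `π ∣ t`; and if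
`π ∣ t` and `n = s c'` with `π ∣ s`, `π ∤ c'` (primitivity), then `π ∣ r`, so `π² ∣ s c'` and
`π² ∣ s`. -/

open Polynomial

section Divisibility
variable {R : Type*} [CommRing R]

-- With `t = trd α` and `n = nrd α`: `π ∣ trd (α - r)` and `π² ∣ nrd (α - r)` for some `r : R`.
def HasSingularRoot (π t n : R) : Prop :=
  ∃ r : R, π ∣ t - 2 * r ∧ π ^ 2 ∣ n - r * t + r ^ 2

variable {π t : R}

theorem HasSingularRoot.dvd_of_dvd_two {n : R} (h : HasSingularRoot π t n) (h2 : π ∣ 2) :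
    π ∣ t := by
  obtain ⟨r, hr, -⟩ := h
  exact (dvd_iff_dvd_of_dvd_sub hr).mpr (h2.mul_right r)

theorem HasSingularRoot.sq_dvd_of_dvd [IsDomain R] {s c : R} (hπ : Prime π)
    (h : HasSingularRoot π t (s * c)) (ht : π ∣ t) (hs : π ∣ s) (hc : ¬π ∣ c) : π ^ 2 ∣ s := by
  obtain ⟨r, -, hr⟩ := h
  have hr' : π ∣ s * c - r * t + r ^ 2 := (dvd_pow_self π two_ne_zero).trans hr
  have hπr : π ∣ r :=
    hπ.dvd_of_dvd_pow ((dvd_add_right (dvd_sub (hs.mul_right c) (ht.mul_left r))).mp hr')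
  have hsc : π ^ 2 ∣ s * c := by
    have hrt : π ^ 2 ∣ r * t := sq π ▸ mul_dvd_mul hπr ht
    rw [show s * c = s * c - r * t + r ^ 2 + r * t - r ^ 2 by ring]
    exact dvd_sub (dvd_add hr hrt) (pow_dvd_pow_of_dvd hπr 2)
  exact hπ.pow_dvd_of_dvd_mul_right 2 hc hsc

theorem sq_dvd_of_hasSingularRoot [IsDomain R] {a b c u v w : R} (hπ : Prime π)
    (hprim : ¬(π ∣ a ∧ π ∣ b ∧ π ∣ c)) (hi : HasSingularRoot π u (b * c))
    (hj : HasSingularRoot π v (a * c)) (hk : HasSingularRoot π w (a * b))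
    (hu : π ∣ u) (hv : π ∣ v) (hw : π ∣ w) :
    ∀ s ∈ ({a, b, c} : Set R), π ∣ s → π ^ 2 ∣ s := by
  rintro s (rfl | rfl | rfl) hs
  · by_cases hb : π ∣ b
    · exact hj.sq_dvd_of_dvd hπ hv hs fun hc ↦ hprim ⟨hs, hb, hc⟩
    · exact hk.sq_dvd_of_dvd hπ hw hs hb
  · by_cases ha : π ∣ a
    · exact hi.sq_dvd_of_dvd hπ hu hs fun hc ↦ hprim ⟨ha, hs, hc⟩
    · exact (mul_comm a s ▸ hk).sq_dvd_of_dvd hπ hw hs ha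
  · by_cases ha : π ∣ a
    · exact (mul_comm b s ▸ hi).sq_dvd_of_dvd hπ hu hs fun hb ↦ hprim ⟨ha, hb, hs⟩
    · exact (mul_comm a s ▸ hj).sq_dvd_of_dvd hπ hv hs ha

end Divisibility

section IntegralElements
variable {R F : Type*} [CommRing R] [Field F] [Algebra R F] [IsFractionRing R F]

theorem mem_range_of_sq_add_mul_add_eq_zero [IsIntegrallyClosed R] {z : F} {p q : R}
    (h : z ^ 2 + algebraMap R F p * z + algebraMap R F q = 0) : z ∈ (algebraMap R F).range :=
  IsIntegrallyClosed.isIntegral_iff.mp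
    ⟨X ^ 2 + C p * X + C q, by monicity!, by simpa using h⟩

theorem mem_range_of_trace_norm_mem_range [IsDomain R] [IsDiscreteValuationRing R] {π t n : R}
    (hπ : Irreducible π) (hsing : ¬HasSingularRoot π t n) {x y : F}
    (hT : 2 * x + y * algebraMap R F t ∈ (algebraMap R F).range)
    (hN : x ^ 2 + x * y * algebraMap R F t + y ^ 2 * algebraMap R F n ∈ (algebraMap R F).range) :
    x ∈ (algebraMap R F).range ∧ y ∈ (algebraMap R F).range := by
  obtain ⟨T, hT⟩ := hT
  obtain ⟨N, hN⟩ := hN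
  have hy : y ∈ (algebraMap R F).range := by
    by_contra hy
    obtain ⟨d, hd⟩ : y⁻¹ ∈ (algebraMap R F).range :=
      (ValuationRing.isInteger_or_isInteger R y).resolve_left hy
    have hy0 : y ≠ 0 := by rintro rfl; exact hy (zero_mem _)
    have hπd : π ∣ d := by
      have : d ∈ IsLocalRing.maximalIdeal R := fun hu ↦
        hy ⟨↑hu.unit⁻¹, by rw [← inv_inv y, ← hd, map_units_inv, IsUnit.unit_spec]⟩
      rwa [(IsDiscreteValuationRing.irreducible_iff_uniformizer π).mp hπ,
        Ideal.mem_span_singleton] at this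
    obtain ⟨r, hr⟩ : x / y ∈ (algebraMap R F).range := by
      refine mem_range_of_sq_add_mul_add_eq_zero (p := t) (q := n - N * d ^ 2) ?_
      rw [map_sub, map_mul, map_pow, hN, hd]
      field_simp
      ring
    have hinj := IsFractionRing.injective R F
    refine hsing ⟨-r, ?_, ?_⟩
    · have : t - 2 * -r = T * d := hinj (by
        simp only [map_sub, map_mul, map_neg, map_ofNat, hr, hT, hd]; field_simp; ring)
      exact this ▸ dvd_mul_of_dvd_right hπd T
    · have : n - -r * t + (-r) ^ 2 = N * d ^ 2 := hinj (by
        simp only [map_add, map_sub, map_mul, map_neg, map_pow, hr, hN, hd]; field_simp; ring)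
      exact this ▸ dvd_mul_of_dvd_right (pow_dvd_pow_of_dvd hπd 2) N
  obtain ⟨y₀, rfl⟩ := hy
  refine ⟨mem_range_of_sq_add_mul_add_eq_zero (p := y₀ * t) (q := y₀ ^ 2 * n - N) ?_, y₀, rfl⟩
  rw [map_sub, hN]
  simp only [map_mul, map_pow]
  ring

theorem coeff_minpoly_mem_range_of_isIntegral [IsIntegrallyClosed R] {B : Type*} [Ring B]
    [Algebra F B] [Algebra R B] [IsScalarTower R F B] {β : B} (hβ : IsIntegral R β) (m : ℕ) :
    (minpoly F β).coeff m ∈ (algebraMap R F).range := by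
  have hdvd : minpoly F β ∣ (minpoly R β).map (algebraMap R F) :=
    minpoly.dvd F β (by rw [aeval_map_algebraMap, minpoly.aeval])
  obtain ⟨g, hg⟩ := IsIntegrallyClosed.eq_map_mul_C_of_dvd F (minpoly.monic hβ) hdvd
  rw [(minpoly.monic hβ.tower_top).leadingCoeff, C_1, mul_one] at hg
  exact ⟨g.coeff m, by rw [← hg, coeff_map]⟩

end IntegralElements

theorem minpoly_eq_of_mul_self_eq {F B : Type*} [Field F] [Ring B] [Nontrivial B] [Algebra F B]
    {β : B} {T N : F} (hβ : β * β = T • β - N • 1) (hβF : β ∉ (algebraMap F B).range) :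
    minpoly F β = X ^ 2 - C T * X + C N := by
  have hmonic : (X ^ 2 - C T * X + C N).Monic := by monicity!
  have haeval : aeval β (X ^ 2 - C T * X + C N) = 0 := by
    simp only [map_add, map_sub, map_mul, aeval_X, aeval_C, sq, hβ,
      Algebra.algebraMap_eq_smul_one, smul_mul_assoc, one_mul]
    module
  have hint : IsIntegral F β := ⟨_, hmonic, haeval⟩
  refine (eq_of_monic_of_dvd_of_natDegree_le (minpoly.monic hint) hmonic
    (minpoly.dvd F β haeval) ?_).symm
  have hdeg : (X ^ 2 - C T * X + C N).natDegree = 2 := by compute_degree!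
  exact hdeg.trans_le ((minpoly.two_le_natDegree_iff hint).mpr hβF)

section QuadraticSubalgebra
variable {R B : Type*} [CommRing R] [Ring B] [Algebra R B] {α : B} {t n : R}

theorem smul_one_add_smul_mul_smul_one_add_smul (hα : α * α = t • α - n • 1) (p q r s : R) :
    (p • (1 : B) + q • α) * (r • 1 + s • α) =
      (p * r - q * s * n) • 1 + (p * s + q * r + q * s * t) • α := by
  simp only [add_mul, mul_add, smul_mul_smul_comm, one_mul, mul_one, hα]
  module

variable (α t n) in
def quadraticSubalgebra (hα : α * α = t • α - n • 1) : Subalgebra R B :=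
  (Submodule.span R {1, α}).toSubalgebra (Submodule.subset_span (by simp)) fun _ _ hx hy ↦ by
    obtain ⟨p, q, rfl⟩ := Submodule.mem_span_pair.mp hx
    obtain ⟨r, s, rfl⟩ := Submodule.mem_span_pair.mp hy
    rw [smul_one_add_smul_mul_smul_one_add_smul hα]
    exact Submodule.mem_span_pair.mpr ⟨_, _, rfl⟩

theorem mem_quadraticSubalgebra {hα : α * α = t • α - n • 1} {x : B} :
    x ∈ quadraticSubalgebra α t n hα ↔ ∃ p q : R, p • 1 + q • α = x :=
  Submodule.mem_span_pair

theorem quadraticSubalgebra_mul_comm {hα : α * α = t • α - n • 1} {x y : B}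
    (hx : x ∈ quadraticSubalgebra α t n hα) (hy : y ∈ quadraticSubalgebra α t n hα) :
    x * y = y * x := by
  obtain ⟨p, q, rfl⟩ := mem_quadraticSubalgebra.mp hx
  obtain ⟨r, s, rfl⟩ := mem_quadraticSubalgebra.mp hy
  simp only [smul_one_add_smul_mul_smul_one_add_smul hα]
  module

noncomputable def quadraticSubalgebraBasis {hα : α * α = t • α - n • 1}
    (hind : LinearIndependent R ![1, α]) :
    Module.Basis (Fin 2) R (quadraticSubalgebra α t n hα) :=
  (Module.Basis.span hind).map (LinearEquiv.ofEq _ _ (by simp [Set.pair_comm]))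

end QuadraticSubalgebra

section NotBasic
variable {R F B : Type*} [CommRing R] [IsDomain R] [IsDiscreteValuationRing R] [Field F]
  [Algebra R F] [IsFractionRing R F] [Ring B] [Algebra F B] [Algebra R B] [IsScalarTower R F B]
  {α : B} {t n : R}

theorem mem_quadraticSubalgebra_of_isIntegral {π : R} (hπ : Irreducible π)
    (hsing : ¬HasSingularRoot π t n) {hα : α * α = t • α - n • 1}
    (hind : LinearIndependent R ![1, α]) {β : B}
    (hβ : β ∈ Submodule.span F (quadraticSubalgebra α t n hα : Set B)) (hint : IsIntegral R β) :
    β ∈ quadraticSubalgebra α t n hα := by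
  have : Nontrivial B := nontrivial_of_ne _ _ (hind.ne_zero 0)
  have hindF := LinearIndependent.pair_iff.mp ((LinearIndependent.iff_fractionRing R F).mp hind)
  rw [show (quadraticSubalgebra α t n hα : Set B) = Submodule.span R {1, α} from rfl,
    Submodule.span_span_of_tower] at hβ
  obtain ⟨x, y, rfl⟩ := Submodule.mem_span_pair.mp hβ
  suffices x ∈ (algebraMap R F).range ∧ y ∈ (algebraMap R F).range by
    obtain ⟨⟨x₀, rfl⟩, ⟨y₀, rfl⟩⟩ := this
    exact mem_quadraticSubalgebra.mpr ⟨x₀, y₀, by simp only [algebraMap_smul]⟩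
  by_cases hy : y = 0
  · subst hy
    have hx := coeff_minpoly_mem_range_of_isIntegral (F := F) hint 0
    rw [zero_smul, add_zero, ← Algebra.algebraMap_eq_smul_one, minpoly.eq_X_sub_C] at hx
    simpa using hx
  have hαF : α * α = algebraMap R F t • α - algebraMap R F n • 1 := by
    simpa only [algebraMap_smul] using hα
  have hβF : x • 1 + y • α ∉ (algebraMap F B).range := by
    rintro ⟨z, hz⟩
    refine hy (hindF (x - z) y ?_).2
    rw [sub_smul, ← Algebra.algebraMap_eq_smul_one z, hz]
    abel
  have hmin := minpoly_eq_of_mul_self_eq (T := 2 * x + y * algebraMap R F t)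
    (N := x ^ 2 + x * y * algebraMap R F t + y ^ 2 * algebraMap R F n) (by
    rw [smul_one_add_smul_mul_smul_one_add_smul hαF]; module) hβF
  have hcoeff := coeff_minpoly_mem_range_of_isIntegral (F := F) hint
  simp only [hmin, coeff_add, coeff_sub, coeff_X_pow, coeff_C_mul, coeff_X, coeff_C] at hcoeff
  refine mem_range_of_trace_norm_mem_range hπ hsing ?_ (by simpa using hcoeff 0)
  simpa using neg_mem (hcoeff 1)

theorem hasSingularRoot_of_not_isBasicOrder {π : R} (hπ : Irreducible π) {O : Subalgebra R B}
    (hO : ¬IsBasicOrder R F B O) (hαO : α ∈ O)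
    (hα : α * α = algebraMap R B t * α - algebraMap R B n) (hind : LinearIndependent R ![1, α]) :
    HasSingularRoot π t n := by
  have hα' : α * α = t • α - n • 1 := by rw [hα, Algebra.smul_def, Algebra.smul_def, mul_one]
  by_contra hsing
  refine hO ⟨quadraticSubalgebra α t n hα', fun x hx ↦ ?_,
    fun _ hx _ hy ↦ quadraticSubalgebra_mul_comm hx hy,
    .of_basis (quadraticSubalgebraBasis hind),
    by rw [Module.finrank_eq_card_basis (quadraticSubalgebraBasis hind), Fintype.card_fin],
    fun _ hβ hint ↦ mem_quadraticSubalgebra_of_isIntegral hπ hsing hind hβ hint⟩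
  obtain ⟨p, q, rfl⟩ := mem_quadraticSubalgebra.mp hx
  exact add_mem (O.smul_mem O.one_mem p) (O.smul_mem hαO q)

end NotBasic

theorem LinearIndependent.pair_of_ne {ι R M : Type*} [Semiring R] [AddCommMonoid M] [Module R M]
    {v : ι → M} (hv : LinearIndependent R v) {x y : ι} (hxy : x ≠ y) :
    LinearIndependent R ![v x, v y] := by
  have hinj : Function.Injective ![x, y] := by
    intro p q; fin_cases p <;> fin_cases q <;> simp [hxy, hxy.symm]
  convert hv.comp _ hinj using 1
  ext p; fin_cases p <;> rfl

theorem stmt_11_general (R F B : Type*) [CommRing R] [IsDomain R] [IsDiscreteValuationRing R]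
    [Field F] [Algebra R F] [IsFractionRing R F]
    [Ring B] [Algebra F B] [Algebra R B] [IsScalarTower R F B]
    (π : R) (hπ : Irreducible π)
    (O : Subalgebra R B)
    (a b c u v w : R) (i j k : B)
    (hspan : Subalgebra.toSubmodule O = Submodule.span R {1, i, j, k})
    (hindep : LinearIndependent R ![1, i, j, k])
    (hii : i * i = algebraMap R B u * i - algebraMap R B (b * c))
    (hjj : j * j = algebraMap R B v * j - algebraMap R B (a * c))
    (hkk : k * k = algebraMap R B w * k - algebraMap R B (a * b))
    (hprim : ¬ (π ∣ a ∧ π ∣ b ∧ π ∣ c ∧ π ∣ u ∧ π ∣ v ∧ π ∣ w))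
    (hnotbasic : ¬ IsBasicOrder R F B O) :
    ((π ∣ (2 : R)) → π ∣ u ∧ π ∣ v ∧ π ∣ w) ∧
    ((π ∣ u ∧ π ∣ v ∧ π ∣ w) → ∀ s ∈ ({a, b, c} : Set R), π ∣ s → π ^ 2 ∣ s) := by
  have hmem : ∀ x ∈ ({1, i, j, k} : Set B), x ∈ O := fun x hx ↦ by
    rw [← Subalgebra.mem_toSubmodule, hspan]
    exact Submodule.subset_span hx
  have hi := hasSingularRoot_of_not_isBasicOrder hπ hnotbasic (hmem i (by simp)) hii
    (hindep.pair_of_ne (x := 0) (y := 1) (by decide))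
  have hj := hasSingularRoot_of_not_isBasicOrder hπ hnotbasic (hmem j (by simp)) hjj
    (hindep.pair_of_ne (x := 0) (y := 2) (by decide))
  have hk := hasSingularRoot_of_not_isBasicOrder hπ hnotbasic (hmem k (by simp)) hkk
    (hindep.pair_of_ne (x := 0) (y := 3) (by decide))
  refine ⟨fun h2 ↦ ⟨hi.dvd_of_dvd_two h2, hj.dvd_of_dvd_two h2, hk.dvd_of_dvd_two h2⟩, ?_⟩
  rintro ⟨hu, hv, hw⟩
  exact sq_dvd_of_hasSingularRoot hπ.prime (fun h ↦ hprim ⟨h.1, h.2.1, h.2.2, hu, hv, hw⟩)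
    hi hj hk hu hv hw

/-- let `O` be a Gorenstein quaternion order over a DVR, with good basis
`1, i, j, k` and associated primitive ternary quadratic form with coefficients
`a, b, c, u, v, w`.  If `O` is not basic then: (a) if `π ∣ 2` then `π ∣ u, v, w`; and
(b) if `π ∣ u, v, w` and `s ∈ {a, b, c}` with `π ∣ s`, then `π² ∣ s`. -/
theorem stmt_11 (R F B : Type*) [CommRing R] [IsDomain R] [IsDiscreteValuationRing R]
    [Field F] [Algebra R F] [IsFractionRing R F]
    [Ring B] [Algebra F B] [Algebra R B] [IsScalarTower R F B]
    [Algebra.IsCentral F B] [IsSimpleRing B] (hBdim : Module.finrank F B = 4)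
    (π : R) (hπ : Irreducible π)
    (O : Subalgebra R B) (hO : IsQuaternionOrder R F B O)
    (a b c u v w : R) (i j k : B)
    (hspan : Subalgebra.toSubmodule O = Submodule.span R {1, i, j, k})
    (hindep : LinearIndependent R ![1, i, j, k])
    (hii : i * i = algebraMap R B u * i - algebraMap R B (b * c))
    (hjj : j * j = algebraMap R B v * j - algebraMap R B (a * c))
    (hkk : k * k = algebraMap R B w * k - algebraMap R B (a * b))
    (hjk : j * k = algebraMap R B a * (algebraMap R B u - i))
    (hki : k * i = algebraMap R B b * (algebraMap R B v - j))
    (hij : i * j = algebraMap R B c * (algebraMap R B w - k))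
    (hprim : ¬ (π ∣ a ∧ π ∣ b ∧ π ∣ c ∧ π ∣ u ∧ π ∣ v ∧ π ∣ w))
    (hnotbasic : ¬ IsBasicOrder R F B O) :
    ((π ∣ (2 : R)) → π ∣ u ∧ π ∣ v ∧ π ∣ w) ∧
    ((π ∣ u ∧ π ∣ v ∧ π ∣ w) → ∀ s ∈ ({a, b, c} : Set R), π ∣ s → π ^ 2 ∣ s) :=
  stmt_11_general R F B π hπ O a b c u v w i j k hspan hindep hii hjj hkk hprim hnotbasic
end
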